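/- arXiv:2302.14790 — 7 statements merged into one kernel-verified Lean document; each statement's English description precedes it below -/
import Mathlib

section
/- Let (u,w) be the unique optimal solution of subproblem (V). Then (u,w) = (0,0) if and only if 0 ≤ x ⊥ Gb ≥ 0, i.e., x ≥ 0, Gb ≥ 0, and xᵢ·(Gb)ᵢ = 0 for every index i. (In the paper's terms: the solution of the normal subproblem is zero if and only if x is feasible for the constraints or an infeasible stationary point.) -/
open Matrix

/-- Euclidean norm of a vector in `ℝᵏ` (represented as `Fin k → ℝ`). -/
noncomputable def nrm2 {k : ℕ} (a : Fin k → ℝ) : ℝ := Real.sqrt (∑ i, (a i) ^ 2)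

/-- Feasibility for subproblem (V): `Gᵀu = 0` and `x + u + Gw ≥ 0`. -/
def feasV {n m : ℕ} (G : Matrix (Fin n) (Fin m) ℝ) (x : Fin n → ℝ)
    (p : (Fin n → ℝ) × (Fin m → ℝ)) : Prop :=
  Gᵀ *ᵥ p.1 = 0 ∧ 0 ≤ x + p.1 + G *ᵥ p.2

/-- Objective of subproblem (V): `(1/2)‖b + GᵀG w‖² + (1/2)μ‖u‖²`. -/
noncomputable def objV {n m : ℕ} (G : Matrix (Fin n) (Fin m) ℝ) (b : Fin m → ℝ) (μ : ℝ)
    (p : (Fin n → ℝ) × (Fin m → ℝ)) : ℝ :=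
  (1 / 2) * nrm2 (b + Gᵀ *ᵥ (G *ᵥ p.2)) ^ 2 + (1 / 2) * μ * nrm2 p.1 ^ 2

lemma nrm2_sq {k : ℕ} (a : Fin k → ℝ) : nrm2 a ^ 2 = a ⬝ᵥ a := by
  unfold nrm2
  rw [Real.sq_sqrt (Finset.sum_nonneg fun i _ => sq_nonneg _)]
  simp [dotProduct, sq]

lemma transfer {n m : ℕ} (G : Matrix (Fin n) (Fin m) ℝ) (a : Fin m → ℝ) (c : Fin n → ℝ) :
    a ⬝ᵥ (Gᵀ *ᵥ c) = (G *ᵥ a) ⬝ᵥ c := by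
  rw [Matrix.dotProduct_mulVec, Matrix.vecMul_transpose]

lemma small_t {A B : ℝ} (h : ∀ t : ℝ, 0 < t → t ≤ 1 → 0 ≤ t * A + t ^ 2 * B) : 0 ≤ A := by
  by_contra hA
  push_neg at hA
  have hB1 : (0:ℝ) < |B| + 1 := by positivity
  set t := min 1 (-A / (2 * (|B| + 1))) with ht
  have htpos : 0 < t := lt_min one_pos (div_pos (by linarith) (by positivity))
  have ht1 : t ≤ 1 := min_le_left _ _
  have ht2 : t ≤ -A / (2 * (|B| + 1)) := min_le_right _ _
  have h3 : t * (2 * (|B| + 1)) ≤ -A := by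
    rw [← le_div_iff₀ (by positivity)]; exact ht2
  have h4 : B ≤ |B| := le_abs_self B
  have h5 := h t htpos ht1
  nlinarith [mul_pos htpos htpos, sq_nonneg t, mul_le_mul_of_nonneg_left h3 htpos.le,
    mul_le_mul_of_nonneg_left h4 (mul_pos htpos htpos).le]

lemma objV_eq {n m : ℕ} (G : Matrix (Fin n) (Fin m) ℝ) (b : Fin m → ℝ) (μ : ℝ)
    (p : (Fin n → ℝ) × (Fin m → ℝ)) :
    objV G b μ p = (1/2) * (b ⬝ᵥ b) + b ⬝ᵥ (Gᵀ *ᵥ (G *ᵥ p.2))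
      + (1/2) * ((Gᵀ *ᵥ (G *ᵥ p.2)) ⬝ᵥ (Gᵀ *ᵥ (G *ᵥ p.2))) + (1/2) * μ * (p.1 ⬝ᵥ p.1) := by
  unfold objV
  rw [nrm2_sq, nrm2_sq, add_dotProduct, dotProduct_add, dotProduct_add,
    dotProduct_comm (Gᵀ *ᵥ (G *ᵥ p.2)) b]
  ring

lemma GtG_inj {n m : ℕ} (G : Matrix (Fin n) (Fin m) ℝ)
    (hrank : Function.Injective G.mulVec) {y : Fin m → ℝ}
    (hy : Gᵀ *ᵥ (G *ᵥ y) = 0) : y = 0 := by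
  have h1 : (G *ᵥ y) ⬝ᵥ (G *ᵥ y) = 0 := by
    rw [← transfer, hy, dotProduct_zero]
  have h2 : G *ᵥ y = 0 := dotProduct_self_eq_zero.mp h1
  apply hrank
  rw [h2, Matrix.mulVec_zero]

lemma GtG_surj {n m : ℕ} (G : Matrix (Fin n) (Fin m) ℝ)
    (hrank : Function.Injective G.mulVec) (z : Fin m → ℝ) :
    ∃ y : Fin m → ℝ, Gᵀ *ᵥ (G *ᵥ y) = z := by
  have hinj : Function.Injective (Gᵀ * G).mulVecLin := by
    intro a c h
    simp only [Matrix.mulVecLin_apply] at h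
    have h' : Gᵀ *ᵥ (G *ᵥ (a - c)) = 0 := by
      rw [Matrix.mulVec_mulVec, Matrix.mulVec_sub, h, sub_self]
    have := GtG_inj G hrank h'
    exact sub_eq_zero.mp this
  have hsurj : Function.Surjective (Gᵀ * G).mulVecLin :=
    (LinearMap.injective_iff_surjective).mp hinj
  obtain ⟨y, hy⟩ := hsurj z
  exact ⟨y, by rw [Matrix.mulVec_mulVec]; exact hy⟩

/-- The optimal solution `(u,w)` of subproblem (V) is `(0,0)` if and only if
`0 ≤ x ⊥ Gb ≥ 0`, i.e. `x ≥ 0`, `Gb ≥ 0`, and `xᵢ·(Gb)ᵢ = 0` for every `i`. -/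
theorem normal_subproblem_zero_iff_stationary
    {n m : ℕ} (G : Matrix (Fin n) (Fin m) ℝ) (b : Fin m → ℝ)
    (x : Fin n → ℝ) (μ : ℝ) (hx : 0 ≤ x) (hμ : 0 < μ)
    (hrank : Function.Injective G.mulVec)
    (u : Fin n → ℝ) (w : Fin m → ℝ)
    (hfeas : feasV G x (u, w))
    (hopt : ∀ q, feasV G x q → objV G b μ (u, w) ≤ objV G b μ q) :
    (u = 0 ∧ w = 0) ↔ (0 ≤ x ∧ 0 ≤ G *ᵥ b ∧ ∀ i, x i * (G *ᵥ b) i = 0) := by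
  have hfeas0 : feasV G x (0, 0) := by
    constructor
    · simp [Matrix.mulVec_zero]
    · simpa [Matrix.mulVec_zero] using hx
  have hobj0 : objV G b μ (0, 0) = (1/2) * (b ⬝ᵥ b) := by
    rw [objV_eq]
    simp [Matrix.mulVec_zero]
  constructor
  · rintro ⟨hu, hw⟩
    subst hu; subst hw
    have dir : ∀ v : Fin n → ℝ, (∀ t : ℝ, 0 < t → t ≤ 1 → 0 ≤ x + t • v) →
        0 ≤ (G *ᵥ b) ⬝ᵥ v := by
      intro v hv
      obtain ⟨w₁, hw₁⟩ := GtG_surj G hrank (Gᵀ *ᵥ v)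
      set u₁ : Fin n → ℝ := v - G *ᵥ w₁ with hu₁
      rw [← transfer]
      apply small_t (B := (1/2) * ((Gᵀ *ᵥ v) ⬝ᵥ (Gᵀ *ᵥ v)) + (1/2) * μ * (u₁ ⬝ᵥ u₁))
      intro t htpos ht1
      have hfq : feasV G x (t • u₁, t • w₁) := by
        constructor
        · show Gᵀ *ᵥ (t • u₁) = 0
          rw [Matrix.mulVec_smul, hu₁, Matrix.mulVec_sub, hw₁, sub_self, smul_zero]
        · show 0 ≤ x + t • u₁ + G *ᵥ (t • w₁)
          have heq : x + t • u₁ + G *ᵥ (t • w₁) = x + t • v := by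
            rw [Matrix.mulVec_smul, hu₁]
            module
          rw [heq]
          exact hv t htpos ht1
      have hle := hopt _ hfq
      rw [hobj0, objV_eq] at hle
      simp only [Matrix.mulVec_smul, hw₁] at hle
      rw [dotProduct_smul, smul_dotProduct, dotProduct_smul, smul_dotProduct,
        dotProduct_smul] at hle
      simp only [smul_eq_mul] at hle
      nlinarith [hle]
    have hGb : 0 ≤ G *ᵥ b := by
      intro i
      have hd := dir (Pi.single i 1) (by
        intro t htpos _ j
        simp only [Pi.add_apply, Pi.smul_apply, smul_eq_mul, Pi.zero_apply]
        rcases eq_or_ne j i with rfl | hne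
        · simp only [Pi.single_eq_same, mul_one]
          have := hx j
          simp only [Pi.zero_apply] at this
          linarith
        · simp only [Pi.single_eq_of_ne hne, mul_zero, add_zero]
          simpa using hx j)
      simpa using hd
    refine ⟨hx, hGb, ?_⟩
    have hle := dir (-x) (by
      intro t htpos ht1 j
      simp only [Pi.add_apply, Pi.smul_apply, Pi.neg_apply, smul_eq_mul, Pi.zero_apply]
      have := hx j
      simp only [Pi.zero_apply] at this
      nlinarith)
    rw [dotProduct_neg] at hle
    have hsum : ∑ i, x i * (G *ᵥ b) i = 0 := by
      have hle' : ∑ i, x i * (G *ᵥ b) i ≤ 0 := by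
        have heq : (G *ᵥ b) ⬝ᵥ x = ∑ i, x i * (G *ᵥ b) i := by
          unfold dotProduct; exact Finset.sum_congr rfl fun i _ => mul_comm _ _
        linarith [heq]
      have hge : 0 ≤ ∑ i, x i * (G *ᵥ b) i :=
        Finset.sum_nonneg fun i _ => mul_nonneg (hx i) (hGb i)
      linarith
    intro i
    have := (Finset.sum_eq_zero_iff_of_nonneg
      (fun i _ => mul_nonneg (hx i) (hGb i))).mp hsum i (Finset.mem_univ i)
    exact this
  · rintro ⟨_, hGb, hcomp⟩
    have h1 := hopt _ hfeas0
    rw [hobj0, objV_eq] at h1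
    set s : Fin m → ℝ := Gᵀ *ᵥ (G *ᵥ w) with hs
    have hbs : 0 ≤ b ⬝ᵥ s := by
      rw [hs, transfer]
      have e1 : (G *ᵥ b) ⬝ᵥ (G *ᵥ w) = (G *ᵥ b) ⬝ᵥ (x + u + G *ᵥ w)
          - (G *ᵥ b) ⬝ᵥ x - (G *ᵥ b) ⬝ᵥ u := by
        rw [dotProduct_add, dotProduct_add]; ring
      have e2 : (G *ᵥ b) ⬝ᵥ x = 0 := by
        unfold dotProduct
        apply Finset.sum_eq_zero
        intro i _
        rw [mul_comm]
        exact hcomp i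
      have e3 : (G *ᵥ b) ⬝ᵥ u = 0 := by
        have : (G *ᵥ b) ⬝ᵥ u = b ⬝ᵥ (Gᵀ *ᵥ u) := (transfer G b u).symm
        rw [this]
        have hfu : Gᵀ *ᵥ u = 0 := hfeas.1
        rw [hfu, dotProduct_zero]
      have e4 : 0 ≤ (G *ᵥ b) ⬝ᵥ (x + u + G *ᵥ w) :=
        Finset.sum_nonneg fun i _ => mul_nonneg (hGb i) (hfeas.2 i)
      rw [e1, e2, e3]
      linarith
    have hss : 0 ≤ s ⬝ᵥ s := Finset.sum_nonneg fun i _ => mul_self_nonneg _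
    have huu : 0 ≤ u ⬝ᵥ u := Finset.sum_nonneg fun i _ => mul_self_nonneg _
    have h1' : b ⬝ᵥ s + (1/2) * (s ⬝ᵥ s) + (1/2) * μ * (u ⬝ᵥ u) ≤ 0 := by
      have : (u, w).1 ⬝ᵥ (u, w).1 = u ⬝ᵥ u := rfl
      linarith [h1]
    have hu0 : u = 0 := by
      apply dotProduct_self_eq_zero.mp
      nlinarith
    have hs0 : s = 0 := by
      apply dotProduct_self_eq_zero.mp
      nlinarith
    exact ⟨hu0, GtG_inj G hrank (hs ▸ hs0)⟩
end

section
/- Suppose in addition that λ > 0 with GᵀG ⪰ λI (positive semidefinite ordering on ℝ^{m×m}), that κ_{∇c} > 0 with ‖G‖₂ ≤ κ_{∇c} (spectral norm), and that κ_c > 0 with ‖b‖ ≤ κ_c. Let (u,w) be the unique optimal solution of subproblem (V) and v := u + Gw. Then ‖b‖ − ‖b + Gᵀv‖ ≥ κ_{v,2} ‖v‖², where κ_{v,2} := (2κ_c)⁻¹ · min{λ²/κ_{∇c}², 2μ}. -/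
open Matrix

lemma nrm2_nonneg {k : ℕ} (a : Fin k → ℝ) : 0 ≤ nrm2 a := Real.sqrt_nonneg _

lemma dot_transpose {n m : ℕ} (G : Matrix (Fin n) (Fin m) ℝ) (z : Fin n → ℝ) (y : Fin m → ℝ) :
    (Gᵀ *ᵥ z) ⬝ᵥ y = z ⬝ᵥ (G *ᵥ y) := by
  rw [Matrix.mulVec_transpose, Matrix.dotProduct_mulVec]

lemma nrm2_add_sq {k : ℕ} (a e : Fin k → ℝ) :
    nrm2 (a + e) ^ 2 = nrm2 a ^ 2 + 2 * (a ⬝ᵥ e) + nrm2 e ^ 2 := by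
  simp only [nrm2_sq, dotProduct_add, add_dotProduct, dotProduct_comm e a]
  ring

lemma nrm2_le_of_sq_le {k : ℕ} (a e : Fin k → ℝ) (h : nrm2 a ^ 2 ≤ nrm2 e ^ 2) :
    nrm2 a ≤ nrm2 e := by
  nlinarith [nrm2_nonneg a, nrm2_nonneg e]

set_option maxHeartbeats 1000000 in
/-- Under `GᵀG ⪰ λI`, `‖G‖₂ ≤ κ∇c`, and `‖b‖ ≤ κc`, the optimal solution of
subproblem (V) with `v := u + Gw` satisfies
`‖b‖ − ‖b + Gᵀv‖ ≥ (2κc)⁻¹ · min{λ²/κ∇c², 2μ} · ‖v‖²`. -/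
theorem normal_subproblem_quadratic_stationarity_bound
    {n m : ℕ} (G : Matrix (Fin n) (Fin m) ℝ) (b : Fin m → ℝ)
    (x : Fin n → ℝ) (μ : ℝ) (hx : 0 ≤ x) (hμ : 0 < μ)
    (hrank : Function.Injective G.mulVec)
    (lam : ℝ) (hlam : 0 < lam)
    (hGG : (Gᵀ * G - lam • (1 : Matrix (Fin m) (Fin m) ℝ)).PosSemidef)
    (κgc : ℝ) (hκgc : 0 < κgc) (hGnorm : ∀ z : Fin m → ℝ, nrm2 (G *ᵥ z) ≤ κgc * nrm2 z)
    (κc : ℝ) (hκc : 0 < κc) (hb : nrm2 b ≤ κc)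
    (u : Fin n → ℝ) (w : Fin m → ℝ)
    (hfeas : feasV G x (u, w))
    (hopt : ∀ q, feasV G x q → objV G b μ (u, w) ≤ objV G b μ q) :
    nrm2 b - nrm2 (b + Gᵀ *ᵥ (u + G *ᵥ w)) ≥
      (2 * κc)⁻¹ * min (lam ^ 2 / κgc ^ 2) (2 * μ) * nrm2 (u + G *ᵥ w) ^ 2 := by
  obtain ⟨hu0, hxv⟩ := hfeas
  set c : Fin m → ℝ := Gᵀ *ᵥ (G *ᵥ w) with hc
  have hGv : Gᵀ *ᵥ (u + G *ᵥ w) = c := by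
    rw [Matrix.mulVec_add, hu0, zero_add]
  rw [hGv]
  -- scalar abbreviations
  set β : ℝ := b ⬝ᵥ c with hβ
  set C : ℝ := nrm2 c ^ 2 with hC
  set U : ℝ := nrm2 u ^ 2 with hU
  have hC0 : 0 ≤ C := sq_nonneg _
  have hU0 : 0 ≤ U := sq_nonneg _
  -- expansion of the first objective term
  have hbc : nrm2 (b + c) ^ 2 = nrm2 b ^ 2 + 2 * β + C := nrm2_add_sq b c
  -- Step 1: compare with (0,0)
  have hfeas0 : feasV G x (0, 0) := by
    constructor
    · simp [feasV]
    · simpa [feasV] using hx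
  have h00 := hopt (0, 0) hfeas0
  have hobj0 : objV G b μ (0, 0) = (1 / 2) * nrm2 b ^ 2 := by
    simp [objV, nrm2, Matrix.mulVec_zero]
  have h1 : nrm2 (b + c) ^ 2 + μ * U ≤ nrm2 b ^ 2 := by
    rw [hobj0] at h00
    simp only [objV] at h00
    rw [← hc, ← hU] at h00
    linarith [h00]
  -- Step 2: scaling inequality, any t ∈ (0,1]
  have hA : ∀ t : ℝ, 0 < t → t ≤ 1 →
      2 * t * (β + C + μ * U) ≤ t ^ 2 * (C + μ * U) := by
    intro t ht ht1
    have hfeast : feasV G x ((1 - t) • u, (1 - t) • w) := by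
      constructor
      · show Gᵀ *ᵥ ((1 - t) • u) = 0
        rw [Matrix.mulVec_smul, hu0, smul_zero]
      · intro i
        have h1i := hxv i
        have h2i := hx i
        simp only [Pi.add_apply, Pi.smul_apply, Pi.zero_apply, smul_eq_mul,
          Matrix.mulVec_smul] at *
        nlinarith [h1i, h2i]
    have hineq := hopt _ hfeast
    have e1 : G *ᵥ ((1 - t) • w) = (1 - t) • (G *ᵥ w) := Matrix.mulVec_smul _ _ _
    have e2 : Gᵀ *ᵥ ((1 - t) • (G *ᵥ w)) = (1 - t) • c := Matrix.mulVec_smul _ _ _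
    have e3 : nrm2 (b + (1 - t) • c) ^ 2 = nrm2 b ^ 2 + 2 * (1 - t) * β + (1 - t) ^ 2 * C := by
      rw [nrm2_add_sq]
      have : b ⬝ᵥ ((1 - t) • c) = (1 - t) * β := by
        rw [dotProduct_smul, smul_eq_mul]
      rw [this]
      have : nrm2 ((1 - t) • c) ^ 2 = (1 - t) ^ 2 * C := by
        rw [nrm2_sq, smul_dotProduct, dotProduct_smul, hC, nrm2_sq]
        simp [smul_eq_mul]; ring
      rw [this]; ring
    have e4 : nrm2 ((1 - t) • u) ^ 2 = (1 - t) ^ 2 * U := by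
      rw [nrm2_sq, smul_dotProduct, dotProduct_smul, hU, nrm2_sq]
      simp [smul_eq_mul]; ring
    simp only [objV] at hineq
    rw [e1, e2, e3, e4, ← hc, hbc] at hineq
    nlinarith [hineq]
  -- A ≤ 0
  have hA0 : β + C + μ * U ≤ 0 := by
    by_contra h
    push_neg at h
    set A : ℝ := β + C + μ * U with hAdef
    set B : ℝ := C + μ * U with hBdef
    have hB0 : 0 ≤ B := by
      have : 0 ≤ μ * U := mul_nonneg hμ.le hU0
      linarith
    rcases eq_or_lt_of_le hB0 with hB | hB
    · have := hA 1 one_pos le_rfl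
      rw [← hB] at this
      nlinarith
    · have htpos : 0 < min 1 (A / B) := by
        apply lt_min one_pos
        exact div_pos h hB
      have htle : min 1 (A / B) ≤ 1 := min_le_left _ _
      have := hA _ htpos htle
      set t : ℝ := min 1 (A / B) with htdef
      have ht1 : t ≤ A / B := min_le_right _ _
      have htB : t * B ≤ A := by
        rw [← div_mul_cancel₀ A hB.ne']
        exact mul_le_mul_of_nonneg_right ht1 hB.le
      nlinarith [this, htpos, htB]
  -- Step 3: spectral bounds
  have hcw : c ⬝ᵥ w = (G *ᵥ w) ⬝ᵥ (G *ᵥ w) := dot_transpose G (G *ᵥ w) w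
  have hlow : lam * (w ⬝ᵥ w) ≤ (G *ᵥ w) ⬝ᵥ (G *ᵥ w) := by
    have h2 := hGG.dotProduct_mulVec_nonneg w
    rw [star_trivial, Matrix.sub_mulVec, dotProduct_sub, ← Matrix.mulVec_mulVec,
      Matrix.smul_mulVec, Matrix.one_mulVec, dotProduct_smul] at h2
    have h3 : w ⬝ᵥ (Gᵀ *ᵥ (G *ᵥ w)) = (G *ᵥ w) ⬝ᵥ (G *ᵥ w) := by
      rw [dotProduct_comm]; exact dot_transpose G (G *ᵥ w) w
    rw [h3] at h2
    simp only [smul_eq_mul] at h2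
    linarith
  have hW : nrm2 (G *ᵥ w) ^ 2 = (G *ᵥ w) ⬝ᵥ (G *ᵥ w) := nrm2_sq _
  have hww : nrm2 w ^ 2 = w ⬝ᵥ w := nrm2_sq _
  have hup : nrm2 (G *ᵥ w) ^ 2 ≤ κgc ^ 2 * nrm2 w ^ 2 := by
    have := hGnorm w
    nlinarith [nrm2_nonneg (G *ᵥ w), nrm2_nonneg w]
  have hCS : (c ⬝ᵥ w) ^ 2 ≤ C * nrm2 w ^ 2 := by
    have := Finset.sum_mul_sq_le_sq_mul_sq Finset.univ c w
    simp only [dotProduct, hC, nrm2_sq]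
    calc (∑ i, c i * w i) ^ 2 ≤ (∑ i, c i ^ 2) * ∑ i, w i ^ 2 := this
      _ = (∑ i, c i * c i) * ∑ i, w i * w i := by simp [sq]
  -- C ≥ lam^2 * ‖w‖²
  have hClow : lam ^ 2 * nrm2 w ^ 2 ≤ C := by
    have hw0 : 0 ≤ w ⬝ᵥ w := by rw [← hww]; positivity
    rcases eq_or_lt_of_le hw0 with hw | hw
    · have : nrm2 w ^ 2 = 0 := by rw [hww, ← hw]
      rw [this]; simpa using hC0
    · have key : (lam * (w ⬝ᵥ w)) ^ 2 ≤ (c ⬝ᵥ w) ^ 2 := by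
        rw [hcw]
        have h0 : 0 ≤ lam * (w ⬝ᵥ w) := mul_nonneg hlam.le hw0
        nlinarith [hlow]
      have key' : lam ^ 2 * (w ⬝ᵥ w) ^ 2 ≤ C * (w ⬝ᵥ w) := by
        have := le_trans key hCS
        rw [hww] at this
        nlinarith [this]
      rw [hww]
      nlinarith [key', hw]
  -- C ≥ (lam²/κgc²) ‖Gw‖²
  have hCGw : lam ^ 2 / κgc ^ 2 * nrm2 (G *ᵥ w) ^ 2 ≤ C := by
    have h1' : lam ^ 2 / κgc ^ 2 * nrm2 (G *ᵥ w) ^ 2 ≤ lam ^ 2 / κgc ^ 2 * (κgc ^ 2 * nrm2 w ^ 2) := by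
      apply mul_le_mul_of_nonneg_left hup (by positivity)
    have h2' : lam ^ 2 / κgc ^ 2 * (κgc ^ 2 * nrm2 w ^ 2) = lam ^ 2 * nrm2 w ^ 2 := by
      field_simp
    linarith [hClow]
  -- orthogonality and norm of v
  have horth : u ⬝ᵥ (G *ᵥ w) = 0 := by
    rw [← dot_transpose G u w, hu0, zero_dotProduct]
  have hNv : nrm2 (u + G *ᵥ w) ^ 2 = U + nrm2 (G *ᵥ w) ^ 2 := by
    rw [nrm2_add_sq, horth, hU]; ring
  set K : ℝ := min (lam ^ 2 / κgc ^ 2) (2 * μ) with hK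
  have hK1 : K ≤ lam ^ 2 / κgc ^ 2 := min_le_left _ _
  have hK2 : K ≤ 2 * μ := min_le_right _ _
  have hK0 : 0 ≤ K := le_min (by positivity) (by positivity)
  -- squared-norm gap bound
  have key1 : C + 2 * μ * U ≤ nrm2 b ^ 2 - nrm2 (b + c) ^ 2 := by
    rw [hbc]; linarith [hA0]
  have key2 : K * nrm2 (u + G *ᵥ w) ^ 2 ≤ nrm2 b ^ 2 - nrm2 (b + c) ^ 2 := by
    have hGw0 : (0:ℝ) ≤ nrm2 (G *ᵥ w) ^ 2 := sq_nonneg _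
    have t1 : K * nrm2 (G *ᵥ w) ^ 2 ≤ lam ^ 2 / κgc ^ 2 * nrm2 (G *ᵥ w) ^ 2 :=
      mul_le_mul_of_nonneg_right hK1 hGw0
    have t2 : K * U ≤ 2 * μ * U := mul_le_mul_of_nonneg_right hK2 hU0
    have : K * nrm2 (u + G *ᵥ w) ^ 2 = K * U + K * nrm2 (G *ᵥ w) ^ 2 := by
      rw [hNv]; ring
    rw [this]
    linarith [hCGw, key1, t1, t2]
  -- from squared to plain norms
  have hsle : nrm2 (b + c) ≤ nrm2 b := nrm2_le_of_sq_le _ _ (by linarith [mul_nonneg hμ.le hU0])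
  have hgap0 : 0 ≤ nrm2 b - nrm2 (b + c) := by linarith
  have hden : nrm2 b + nrm2 (b + c) ≤ 2 * κc := by linarith [hsle, hb]
  have h2κ : K * nrm2 (u + G *ᵥ w) ^ 2 ≤ 2 * κc * (nrm2 b - nrm2 (b + c)) := by
    have hfact : nrm2 b ^ 2 - nrm2 (b + c) ^ 2
        = (nrm2 b + nrm2 (b + c)) * (nrm2 b - nrm2 (b + c)) := by ring
    have hnn : 0 ≤ nrm2 b + nrm2 (b + c) := by
      have := nrm2_nonneg b; have := nrm2_nonneg (b + c); linarith
    nlinarith [key2, hgap0, hden, hnn]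
  rw [ge_iff_le]
  calc (2 * κc)⁻¹ * K * nrm2 (u + G *ᵥ w) ^ 2
      = (2 * κc)⁻¹ * (K * nrm2 (u + G *ᵥ w) ^ 2) := by ring
    _ ≤ (2 * κc)⁻¹ * (2 * κc * (nrm2 b - nrm2 (b + c))) := by
        apply mul_le_mul_of_nonneg_left h2κ (by positivity)
    _ = nrm2 b - nrm2 (b + c) := by field_simp
end

section
/- Let (u,w) be the unique optimal solution of subproblem (V), v := u + Gw, and let d be the optimal solution of subproblem (D). If gᵀd + (1/2)dᵀHd > 0, then ‖b‖ − ‖b + Gᵀd‖ > 0. (This is the key step showing that the trial merit parameter value τ_k^{trial} of the algorithm is always strictly positive.) -/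
open Matrix

/-- Feasibility for subproblem (D): `Gᵀd = Gᵀv` and `x + d ≥ 0`. -/
def feasD {n m : ℕ} (G : Matrix (Fin n) (Fin m) ℝ) (x v d : Fin n → ℝ) : Prop :=
  Gᵀ *ᵥ d = Gᵀ *ᵥ v ∧ 0 ≤ x + d

/-- Objective of subproblem (D): `gᵀd + (1/2)dᵀHd`. -/
noncomputable def objD {n : ℕ} (g : Fin n → ℝ) (H : Matrix (Fin n) (Fin n) ℝ)
    (d : Fin n → ℝ) : ℝ :=
  g ⬝ᵥ d + (1 / 2) * (d ⬝ᵥ (H *ᵥ d))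

lemma nrm2_lt_nrm2 {k : ℕ} {a c : Fin k → ℝ} (h : a ⬝ᵥ a < c ⬝ᵥ c) :
    nrm2 a < nrm2 c := by
  unfold nrm2
  apply Real.sqrt_lt_sqrt (Finset.sum_nonneg fun i _ => sq_nonneg _)
  simpa [dotProduct, pow_two] using h

/-- If the optimal solution `d` of subproblem (D) has `gᵀd + (1/2)dᵀHd > 0`, then
`‖b‖ − ‖b + Gᵀd‖ > 0`.  (Hence the trial merit parameter is strictly positive.) -/
theorem trial_merit_parameter_positive
    {n m : ℕ} (G : Matrix (Fin n) (Fin m) ℝ) (b : Fin m → ℝ)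
    (x : Fin n → ℝ) (μ : ℝ) (hx : 0 ≤ x) (hμ : 0 < μ)
    (hrank : Function.Injective G.mulVec)
    (u : Fin n → ℝ) (w : Fin m → ℝ)
    (hfeasV : feasV G x (u, w))
    (hoptV : ∀ q, feasV G x q → objV G b μ (u, w) ≤ objV G b μ q)
    (g : Fin n → ℝ) (H : Matrix (Fin n) (Fin n) ℝ) (hH : H.PosDef)
    (d : Fin n → ℝ)
    (hfeasD : feasD G x (u + G *ᵥ w) d)
    (hoptD : ∀ d', feasD G x (u + G *ᵥ w) d' → objD g H d ≤ objD g H d')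
    (hpos : 0 < objD g H d) :
    0 < nrm2 b - nrm2 (b + Gᵀ *ᵥ d) := by
  obtain ⟨hVu, hVineq⟩ := hfeasV
  set s : Fin m → ℝ := Gᵀ *ᵥ (G *ᵥ w) with hs
  have hGd : Gᵀ *ᵥ d = s := by
    rw [hfeasD.1, mulVec_add, hVu, zero_add]
  -- s ≠ 0, otherwise d' = 0 would give objD ≤ 0
  have hsne : s ≠ 0 := by
    intro h0
    have hfeas0 : feasD G x (u + G *ᵥ w) (0 : Fin n → ℝ) := by
      constructor
      · rw [mulVec_zero, mulVec_add, hVu, zero_add, ← hs, h0]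
      · simpa using hx
    have h := hoptD 0 hfeas0
    have h0' : objD g H (0 : Fin n → ℝ) = 0 := by
      simp [objD]
    rw [h0'] at h
    linarith
  have hS : 0 < s ⬝ᵥ s := by
    have hnn : 0 ≤ s ⬝ᵥ s := Finset.sum_nonneg fun i _ => mul_self_nonneg _
    rcases hnn.lt_or_eq with h | h
    · exact h
    · exact absurd (dotProduct_self_eq_zero.mp h.symm) hsne
  have hU : 0 ≤ u ⬝ᵥ u := Finset.sum_nonneg fun i _ => mul_self_nonneg _
  -- feasibility of the half point
  have hfeas2 : feasV G x ((1 / 2 : ℝ) • u, (1 / 2 : ℝ) • w) := by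
    constructor
    · rw [mulVec_smul, hVu, smul_zero]
    · intro i
      have h1 := hVineq i
      have h2 := hx i
      simp only [Pi.add_apply, Pi.zero_apply, mulVec_smul, Pi.smul_apply, smul_eq_mul] at *
      linarith
  have hkey := hoptV _ hfeas2
  unfold objV at hkey
  simp only [mulVec_smul] at hkey
  rw [← hs] at hkey
  have e1 : nrm2 (b + s) ^ 2 = b ⬝ᵥ b + 2 * (b ⬝ᵥ s) + s ⬝ᵥ s := by
    rw [nrm2_sq, dotProduct_add, add_dotProduct, add_dotProduct, dotProduct_comm s b]
    ring
  have e2 : nrm2 (b + (1 / 2 : ℝ) • s) ^ 2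
      = b ⬝ᵥ b + (b ⬝ᵥ s) + (1 / 4) * (s ⬝ᵥ s) := by
    rw [nrm2_sq, dotProduct_add, add_dotProduct, add_dotProduct, smul_dotProduct,
      dotProduct_smul, dotProduct_smul, smul_dotProduct, dotProduct_comm s b]
    simp only [smul_eq_mul]
    ring
  have e3 : nrm2 ((1 / 2 : ℝ) • u) ^ 2 = (1 / 4) * (u ⬝ᵥ u) := by
    rw [nrm2_sq, smul_dotProduct, dotProduct_smul]
    simp only [smul_eq_mul]
    ring
  have e4 : nrm2 u ^ 2 = u ⬝ᵥ u := nrm2_sq u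
  rw [e1, e2, e3, e4] at hkey
  -- conclude
  have hlt : (b + s) ⬝ᵥ (b + s) < b ⬝ᵥ b := by
    have e5 : (b + s) ⬝ᵥ (b + s) = b ⬝ᵥ b + 2 * (b ⬝ᵥ s) + s ⬝ᵥ s := by
      rw [dotProduct_add, add_dotProduct, add_dotProduct, dotProduct_comm s b]
      ring
    rw [e5]
    nlinarith [mul_nonneg hμ.le hU]
  rw [hGd]
  linarith [nrm2_lt_nrm2 hlt]
end

section
/- Let (u,w) be the unique optimal solution of subproblem (V), v := u + Gw, and let d be the optimal solution of subproblem (D). Let ζ > 0 with H ⪰ ζI, let σ ∈ (0,1), and let τ > 0 be such that τ·(gᵀd + (1/2)dᵀHd) ≤ (1−σ)·(‖b‖ − ‖b + Gᵀd‖) whenever gᵀd + (1/2)dᵀHd > 0. Then the model reduction satisfies Δl := −τ gᵀd + ‖b‖ − ‖b + Gᵀd‖ ≥ (1/2) τ ζ ‖d‖² + σ(‖b‖ − ‖b + Gᵀd‖); in particular, if d ≠ 0 then Δl > 0. -/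
open Matrix

/-- Model reduction bound: if `τ·(gᵀd + (1/2)dᵀHd) ≤ (1−σ)(‖b‖ − ‖b + Gᵀd‖)` whenever
`gᵀd + (1/2)dᵀHd > 0`, then `Δl := −τgᵀd + ‖b‖ − ‖b + Gᵀd‖` satisfies
`Δl ≥ (1/2)τζ‖d‖² + σ(‖b‖ − ‖b + Gᵀd‖)`; in particular `Δl > 0` whenever `d ≠ 0`. -/
theorem model_reduction_lower_bound
    {n m : ℕ} (G : Matrix (Fin n) (Fin m) ℝ) (b : Fin m → ℝ)
    (x : Fin n → ℝ) (μ : ℝ) (hx : 0 ≤ x) (hμ : 0 < μ)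
    (hrank : Function.Injective G.mulVec)
    (u : Fin n → ℝ) (w : Fin m → ℝ)
    (hfeasV : feasV G x (u, w))
    (hoptV : ∀ q, feasV G x q → objV G b μ (u, w) ≤ objV G b μ q)
    (g : Fin n → ℝ) (H : Matrix (Fin n) (Fin n) ℝ) (hH : H.PosDef)
    (d : Fin n → ℝ)
    (hfeasD : feasD G x (u + G *ᵥ w) d)
    (hoptD : ∀ d', feasD G x (u + G *ᵥ w) d' → objD g H d ≤ objD g H d')
    (ζ : ℝ) (hζ : 0 < ζ) (hHζ : (H - ζ • (1 : Matrix (Fin n) (Fin n) ℝ)).PosSemidef)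
    (σ : ℝ) (hσ : σ ∈ Set.Ioo (0 : ℝ) 1)
    (τ : ℝ) (hτ : 0 < τ)
    (hτcond : 0 < objD g H d →
        τ * objD g H d ≤ (1 - σ) * (nrm2 b - nrm2 (b + Gᵀ *ᵥ d))) :
    -(τ * (g ⬝ᵥ d)) + nrm2 b - nrm2 (b + Gᵀ *ᵥ d) ≥
        (1 / 2) * τ * ζ * nrm2 d ^ 2 + σ * (nrm2 b - nrm2 (b + Gᵀ *ᵥ d)) ∧
      (d ≠ 0 → 0 < -(τ * (g ⬝ᵥ d)) + nrm2 b - nrm2 (b + Gᵀ *ᵥ d)) := by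

  obtain ⟨hσ0, hσ1⟩ := hσ
  have hsq : ∀ {k : ℕ} (a : Fin k → ℝ), nrm2 a ^ 2 = ∑ i, (a i) ^ 2 := by
    intro k a
    exact Real.sq_sqrt (Finset.sum_nonneg fun i _ => sq_nonneg _)
  have hnn : ∀ {k : ℕ} (a : Fin k → ℝ), 0 ≤ nrm2 a := fun a => Real.sqrt_nonneg _
  -- rewrite b + Gᵀd
  have hGd : Gᵀ *ᵥ d = Gᵀ *ᵥ (G *ᵥ w) := by
    have h1 := hfeasD.1
    rw [Matrix.mulVec_add, hfeasV.1, zero_add] at h1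
    exact h1
  -- Δb ≥ 0 via optimality of (u,w) against (0,0)
  have hfeas0 : feasV G x ((0 : Fin n → ℝ), (0 : Fin m → ℝ)) := by
    constructor
    · simp [Matrix.mulVec_zero]
    · simpa [Matrix.mulVec_zero] using hx
  have hopt0 := hoptV _ hfeas0
  have hnrm0 : nrm2 (0 : Fin n → ℝ) = 0 := by
    simp [nrm2]
  have hobj0 : objV G b μ ((0 : Fin n → ℝ), (0 : Fin m → ℝ)) = (1/2) * nrm2 b ^ 2 := by
    simp [objV, Matrix.mulVec_zero, hnrm0]
  have hkey : nrm2 (b + Gᵀ *ᵥ (G *ᵥ w)) ^ 2 ≤ nrm2 b ^ 2 := by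
    have h2 : (1/2) * nrm2 (b + Gᵀ *ᵥ (G *ᵥ w)) ^ 2 ≤ objV G b μ (u, w) := by
      have : 0 ≤ (1/2) * μ * nrm2 u ^ 2 :=
        mul_nonneg (mul_nonneg (by norm_num) hμ.le) (sq_nonneg _)
      simp only [objV]
      linarith
    rw [hobj0] at hopt0
    linarith
  have hΔb : 0 ≤ nrm2 b - nrm2 (b + Gᵀ *ᵥ d) := by
    rw [hGd]
    have := le_of_pow_le_pow_left₀ two_ne_zero (hnn b) hkey
    linarith
  -- dᵀHd ≥ ζ‖d‖²
  have hquad : ζ * nrm2 d ^ 2 ≤ d ⬝ᵥ (H *ᵥ d) := by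
    have h := hHζ.dotProduct_mulVec_nonneg d
    have hdd : d ⬝ᵥ d = nrm2 d ^ 2 := by
      rw [hsq d, dotProduct]
      exact Finset.sum_congr rfl fun i _ => (sq (d i)).symm
    simp only [Matrix.sub_mulVec, dotProduct_sub, Matrix.smul_mulVec,
      Matrix.one_mulVec, dotProduct_smul, smul_eq_mul, star_trivial,
      RCLike.re_to_real] at h
    rw [hdd] at h
    linarith
  set Δb := nrm2 b - nrm2 (b + Gᵀ *ᵥ d) with hΔbdef
  have hmain : -(τ * (g ⬝ᵥ d)) + nrm2 b - nrm2 (b + Gᵀ *ᵥ d) ≥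
      (1 / 2) * τ * ζ * nrm2 d ^ 2 + σ * Δb := by
    have hτq : τ * (ζ * nrm2 d ^ 2) ≤ τ * (d ⬝ᵥ (H *ᵥ d)) :=
      mul_le_mul_of_nonneg_left hquad hτ.le
    by_cases hq : 0 < objD g H d
    · have hc := hτcond hq
      simp only [objD] at hc
      nlinarith [hc]
    · push_neg at hq
      simp only [objD] at hq
      nlinarith [mul_nonpos_of_nonneg_of_nonpos hτ.le hq,
        mul_nonneg (sub_nonneg.2 hσ1.le) hΔb]
  refine ⟨hmain, fun hd => ?_⟩
  have hdpos : 0 < nrm2 d := by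
    rw [nrm2, Real.sqrt_pos]
    obtain ⟨i, hi⟩ := Function.ne_iff.1 hd
    exact Finset.sum_pos' (fun j _ => sq_nonneg _)
      ⟨i, Finset.mem_univ i, pow_two_pos_of_ne_zero hi⟩
  have : 0 < (1 / 2) * τ * ζ * nrm2 d ^ 2 :=
    mul_pos (mul_pos (mul_pos (by norm_num) hτ) hζ) (pow_pos hdpos 2)
  nlinarith [mul_nonneg hσ0.le hΔb]
end

section
/- Let b ∈ ℝᵐ, M ∈ ℝ^{m×n}, d ∈ ℝⁿ with d ≠ 0, and scalars τ > 0, L > 0, Γ > 0, η ∈ (0,1), β ∈ (0,1], Δ > 0. Define φ : [0,∞) → ℝ by φ(α) := (η−1)αβΔ + ‖b + αMd‖ − ‖b‖ + α(‖b‖ − ‖b + Md‖) + (1/2)(τL+Γ)α²‖d‖². Then φ(α) ≤ 0 for every α ∈ [0, min{1, 2(1−η)βΔ/((τL+Γ)‖d‖²)}]. (This establishes that the sufficient-decrease step size α_k^{suff} of the algorithm satisfies φ_k(α_k^{suff}) ≤ 0, hence α_k^{suff} ≤ α_k^{φ}.) -/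
open Matrix

lemma nrm2_eq_norm {k : ℕ} (a : Fin k → ℝ) :
    nrm2 a = ‖(WithLp.equiv 2 (Fin k → ℝ)).symm a‖ := by
  rw [EuclideanSpace.norm_eq, nrm2]
  congr 1
  refine Finset.sum_congr rfl fun i _ => ?_
  rw [Real.norm_eq_abs, sq_abs]
  rfl

lemma nrm2_pos {k : ℕ} {a : Fin k → ℝ} (h : a ≠ 0) : 0 < nrm2 a := by
  rw [nrm2_eq_norm]
  refine norm_pos_iff.mpr fun hc => h ?_
  simpa using congrArg (WithLp.equiv 2 (Fin k → ℝ)) hc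

lemma nrm2_add_le {k : ℕ} (a c : Fin k → ℝ) : nrm2 (a + c) ≤ nrm2 a + nrm2 c := by
  simp only [nrm2_eq_norm]
  rw [show (WithLp.equiv 2 (Fin k → ℝ)).symm (a + c)
      = (WithLp.equiv 2 (Fin k → ℝ)).symm a + (WithLp.equiv 2 (Fin k → ℝ)).symm c from rfl]
  exact norm_add_le _ _

lemma nrm2_smul {k : ℕ} (c : ℝ) (a : Fin k → ℝ) : nrm2 (c • a) = |c| * nrm2 a := by
  simp only [nrm2_eq_norm]
  rw [show (WithLp.equiv 2 (Fin k → ℝ)).symm (c • a)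
      = c • (WithLp.equiv 2 (Fin k → ℝ)).symm a from rfl]
  rw [norm_smul, Real.norm_eq_abs]

/-- The function `φ(α) := (η−1)αβΔ + ‖b + αMd‖ − ‖b‖ + α(‖b‖ − ‖b + Md‖)
+ (1/2)(τL+Γ)α²‖d‖²` is nonpositive on `[0, min{1, 2(1−η)βΔ/((τL+Γ)‖d‖²)}]`. -/
theorem varphi_nonpositive_on_sufficient_interval
    {n m : ℕ} (b : Fin m → ℝ) (M : Matrix (Fin m) (Fin n) ℝ) (d : Fin n → ℝ)
    (hd : d ≠ 0) (τ L Γ η β Δ : ℝ) (hτ : 0 < τ) (hL : 0 < L) (hΓ : 0 < Γ)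
    (hη : η ∈ Set.Ioo (0 : ℝ) 1) (hβ : β ∈ Set.Ioc (0 : ℝ) 1) (hΔ : 0 < Δ) :
    ∀ α : ℝ, 0 ≤ α → α ≤ min 1 (2 * (1 - η) * β * Δ / ((τ * L + Γ) * nrm2 d ^ 2)) →
      (η - 1) * α * β * Δ + nrm2 (b + α • (M *ᵥ d)) - nrm2 b
          + α * (nrm2 b - nrm2 (b + M *ᵥ d))
          + (1 / 2) * (τ * L + Γ) * α ^ 2 * nrm2 d ^ 2 ≤ 0 := by
  intro α hα0 hαle
  have hα1 : α ≤ 1 := le_trans hαle (min_le_left _ _)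
  have hC : 0 < τ * L + Γ := by positivity
  have hN : 0 < nrm2 d ^ 2 := pow_pos (nrm2_pos hd) 2
  have hα2 : α ≤ 2 * (1 - η) * β * Δ / ((τ * L + Γ) * nrm2 d ^ 2) :=
    le_trans hαle (min_le_right _ _)
  -- convexity bound
  have hconv : nrm2 (b + α • (M *ᵥ d)) ≤ (1 - α) * nrm2 b + α * nrm2 (b + M *ᵥ d) := by
    have heq : b + α • (M *ᵥ d) = (1 - α) • b + α • (b + M *ᵥ d) := by
      funext i; simp [Pi.add_apply, Pi.smul_apply, smul_eq_mul]; ring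
    rw [heq]
    calc nrm2 ((1 - α) • b + α • (b + M *ᵥ d))
        ≤ nrm2 ((1 - α) • b) + nrm2 (α • (b + M *ᵥ d)) := nrm2_add_le _ _
      _ = (1 - α) * nrm2 b + α * nrm2 (b + M *ᵥ d) := by
          rw [nrm2_smul, nrm2_smul, abs_of_nonneg (by linarith), abs_of_nonneg hα0]
  -- quadratic bound
  have hquad : (1 / 2) * (τ * L + Γ) * α ^ 2 * nrm2 d ^ 2 ≤ (1 - η) * α * β * Δ := by
    have hNe : (0:ℝ) < (τ * L + Γ) * nrm2 d ^ 2 := mul_pos hC hN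
    have hmul : α * ((τ * L + Γ) * nrm2 d ^ 2) ≤ 2 * (1 - η) * β * Δ :=
      (le_div_iff₀ hNe).mp hα2
    nlinarith [mul_le_mul_of_nonneg_left hmul hα0]
  nlinarith [hconv, hquad]
end

section
/- Let x ∈ X, α > 0, and d ∈ ℝⁿ with x + αd ∈ X. Let τ > 0, η ∈ (0,1), β ∈ (0,1], g ∈ ℝⁿ, and d^{true} ∈ ℝⁿ with ∇c(x)ᵀd = ∇c(x)ᵀd^{true}. Suppose that (η−1)αβ·Δl(x,τ,g,d) + ‖c(x) + α∇c(x)ᵀd‖ − ‖c(x)‖ + α(‖c(x)‖ − ‖c(x) + ∇c(x)ᵀd‖) + (1/2)(τL+Γ)α²‖d‖² ≤ 0. Then φ(x+αd, τ) − φ(x, τ) ≤ −α·Δl(x,τ,∇f(x),d^{true}) + ατ·∇f(x)ᵀ(d − d^{true}) + (1−η)αβ·Δl(x,τ,g,d). -/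
open scoped RealInnerProductSpace

lemma quad_taylor {E F : Type*} [NormedAddCommGroup E] [NormedSpace ℝ E]
    [NormedAddCommGroup F] [NormedSpace ℝ F] [CompleteSpace F]
    (φ : E → F) (φ' : E → E →L[ℝ] F) (K : ℝ) (x u : E)
    (hd : ∀ t ∈ Set.Icc (0:ℝ) 1, HasFDerivAt φ (φ' (x + t • u)) (x + t • u))
    (hK : ∀ s ∈ Set.Icc (0:ℝ) 1, ∀ t ∈ Set.Icc (0:ℝ) 1,
      ‖φ' (x + t • u) - φ' (x + s • u)‖ ≤ K * (|t - s| * ‖u‖)) :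
    ‖φ (x + u) - φ x - φ' x u‖ ≤ K / 2 * ‖u‖ ^ 2 := by
  rcases eq_or_ne u 0 with rfl | hu0
  · simp
  have hK0 : 0 ≤ K := by
    have h := hK 0 (by norm_num) 1 (by norm_num)
    have h2 : (0:ℝ) ≤ K * (|1 - (0:ℝ)| * ‖u‖) := le_trans (norm_nonneg _) h
    have hupos : (0:ℝ) < ‖u‖ := norm_pos_iff.mpr hu0
    norm_num at h2
    exact nonneg_of_mul_nonneg_right (by linarith [mul_comm K ‖u‖]) hupos
  set G : ℝ → F := fun t => φ (x + t • u) - t • (φ' x) u with hG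
  set G' : ℝ → F := fun t => (φ' (x + t • u)) u - (φ' x) u with hG'
  have hx0 : x + (0:ℝ) • u = x := by simp
  have hx1 : x + (1:ℝ) • u = x + u := by simp
  have hderiv : ∀ t ∈ Set.uIcc (0:ℝ) 1, HasDerivAt G (G' t) t := by
    intro t ht
    rw [Set.uIcc_of_le (by norm_num)] at ht
    have h1 : HasDerivAt (fun t : ℝ => x + t • u) u t := by
      simpa using ((hasDerivAt_id t).smul_const u).const_add x
    have h2 : HasDerivAt (fun t : ℝ => φ (x + t • u)) ((φ' (x + t • u)) u) t := by
      exact ((hd t ht).comp_hasDerivAt t h1)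
    have h3 : HasDerivAt (fun t : ℝ => t • (φ' x) u) ((φ' x) u) t := by
      simpa using (hasDerivAt_id t).smul_const ((φ' x) u)
    exact h2.sub h3
  have hlip : LipschitzOnWith ((K * ‖u‖ ^ 2).toNNReal) G' (Set.Icc (0:ℝ) 1) := by
    rw [lipschitzOnWith_iff_dist_le_mul]
    intro s hs t ht
    have hd2 : G' s - G' t = (φ' (x + s • u) - φ' (x + t • u)) u := by
      simp only [G', ContinuousLinearMap.sub_apply]; abel
    rw [dist_eq_norm, hd2, Real.coe_toNNReal _ (by positivity), Real.dist_eq]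
    calc ‖(φ' (x + s • u) - φ' (x + t • u)) u‖
        ≤ ‖φ' (x + s • u) - φ' (x + t • u)‖ * ‖u‖ :=
          (φ' (x + s • u) - φ' (x + t • u)).le_opNorm u
      _ ≤ (K * (|s - t| * ‖u‖)) * ‖u‖ := by
          exact mul_le_mul_of_nonneg_right (hK t ht s hs) (norm_nonneg u)
      _ = K * ‖u‖ ^ 2 * |s - t| := by ring
  have hcont : ContinuousOn G' (Set.uIcc (0:ℝ) 1) := by
    rw [Set.uIcc_of_le (by norm_num)]
    exact hlip.continuousOn
  have hint : IntervalIntegrable G' MeasureTheory.volume 0 1 :=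
    hcont.intervalIntegrable
  have heq : ∫ t in (0:ℝ)..1, G' t = G 1 - G 0 :=
    intervalIntegral.integral_eq_sub_of_hasDerivAt hderiv hint
  have hG10 : G 1 - G 0 = φ (x + u) - φ x - φ' x u := by
    simp [G, hx0, hx1]
    abel
  have hbound : ‖∫ t in (0:ℝ)..1, G' t‖ ≤ |∫ t in (0:ℝ)..1, K * ‖u‖ ^ 2 * t| := by
    apply intervalIntegral.norm_integral_le_abs_of_norm_le
      (g := fun t => K * ‖u‖ ^ 2 * t) _ (by
      apply ContinuousOn.intervalIntegrable
      fun_prop)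
    filter_upwards [MeasureTheory.ae_restrict_mem measurableSet_Ioc] with t ht
    rw [Set.uIoc_of_le (by norm_num)] at ht
    have ht' : t ∈ Set.Icc (0:ℝ) 1 := ⟨ht.1.le, ht.2⟩
    calc ‖G' t‖ = ‖(φ' (x + t • u) - φ' (x + (0:ℝ) • u)) u‖ := by
          simp [G', hx0]
      _ ≤ ‖φ' (x + t • u) - φ' (x + (0:ℝ) • u)‖ * ‖u‖ :=
          ContinuousLinearMap.le_opNorm _ u
      _ ≤ (K * (|t - 0| * ‖u‖)) * ‖u‖ :=
          mul_le_mul_of_nonneg_right (hK 0 (by norm_num) t ht') (norm_nonneg u)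
      _ = K * ‖u‖ ^ 2 * t := by
          rw [sub_zero, abs_of_nonneg ht.1.le]; ring
  have hval : |∫ t in (0:ℝ)..1, K * ‖u‖ ^ 2 * t| = K / 2 * ‖u‖ ^ 2 := by
    rw [intervalIntegral.integral_const_mul, integral_id]
    rw [abs_of_nonneg (by positivity)]
    ring
  rw [← hG10, ← heq]
  calc ‖∫ t in (0:ℝ)..1, G' t‖ ≤ _ := hbound
    _ = K / 2 * ‖u‖ ^ 2 := hval




/-- Merit function decrease: if the step size `α` satisfies `φ(α) ≤ 0` (hypothesis `hφ`),
then the merit function `φ(x,τ) = τf(x) + ‖c(x)‖` satisfies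
`φ(x+αd,τ) − φ(x,τ) ≤ −αΔl(x,τ,∇f(x),dᵗ) + ατ⟪∇f(x), d − dᵗ⟫ + (1−η)αβΔl(x,τ,g,d)`,
where `Δl(x,τ,g',d') = −τ⟪g',d'⟫ + ‖c(x)‖ − ‖c(x) + ∇c(x)ᵀd'‖`. -/
theorem merit_function_decrease
    {n m : ℕ} (X : Set (EuclideanSpace ℝ (Fin n)))
    (hXopen : IsOpen X) (hXconv : Convex ℝ X)
    (f : EuclideanSpace ℝ (Fin n) → ℝ)
    (gf : EuclideanSpace ℝ (Fin n) → EuclideanSpace ℝ (Fin n))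
    (c : EuclideanSpace ℝ (Fin n) → EuclideanSpace ℝ (Fin m))
    (Jc : EuclideanSpace ℝ (Fin n) → (EuclideanSpace ℝ (Fin n) →L[ℝ] EuclideanSpace ℝ (Fin m)))
    (L Γ : ℝ)
    (hf : ∀ y ∈ X, HasGradientAt f (gf y) y)
    (hfL : ∀ y ∈ X, ∀ y' ∈ X, ‖gf y - gf y'‖ ≤ L * ‖y - y'‖)
    (hc : ∀ y ∈ X, HasFDerivAt c (Jc y) y)
    (hcL : ∀ y ∈ X, ∀ y' ∈ X, ‖Jc y - Jc y'‖ ≤ Γ * ‖y - y'‖)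
    (x : EuclideanSpace ℝ (Fin n)) (hx : x ∈ X)
    (α : ℝ) (hα : 0 < α)
    (d : EuclideanSpace ℝ (Fin n)) (hxd : x + α • d ∈ X)
    (τ : ℝ) (hτ : 0 < τ)
    (η : ℝ) (hη : η ∈ Set.Ioo (0 : ℝ) 1)
    (β : ℝ) (hβ : β ∈ Set.Ioc (0 : ℝ) 1)
    (g dtrue : EuclideanSpace ℝ (Fin n))
    (hsame : Jc x d = Jc x dtrue)
    (hφ : (η - 1) * α * β * (-(τ * ⟪g, d⟫) + ‖c x‖ - ‖c x + Jc x d‖)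
          + ‖c x + α • Jc x d‖ - ‖c x‖
          + α * (‖c x‖ - ‖c x + Jc x d‖)
          + (1 / 2) * (τ * L + Γ) * α ^ 2 * ‖d‖ ^ 2 ≤ 0) :
    (τ * f (x + α • d) + ‖c (x + α • d)‖) - (τ * f x + ‖c x‖) ≤
      -α * (-(τ * ⟪gf x, dtrue⟫) + ‖c x‖ - ‖c x + Jc x dtrue‖)
        + α * τ * ⟪gf x, d - dtrue⟫
        + (1 - η) * α * β * (-(τ * ⟪g, d⟫) + ‖c x‖ - ‖c x + Jc x d‖) := by

  set u : EuclideanSpace ℝ (Fin n) := α • d with hu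
  have hmem : ∀ t ∈ Set.Icc (0:ℝ) 1, x + t • u ∈ X := by
    intro t ht
    have h := hXconv hx hxd (by linarith [ht.2] : (0:ℝ) ≤ 1 - t) ht.1 (by ring)
    convert h using 1
    module
  have hsub : ∀ s ∈ Set.Icc (0:ℝ) 1, ∀ t ∈ Set.Icc (0:ℝ) 1,
      ‖(x + t • u) - (x + s • u)‖ = |t - s| * ‖u‖ := by
    intro s _ t _
    have h1 : (x + t • u) - (x + s • u) = (t - s) • u := by module
    rw [h1, norm_smul, Real.norm_eq_abs]
  -- bound for c
  have hcb : ‖c (x + u) - c x - Jc x u‖ ≤ Γ / 2 * ‖u‖ ^ 2 := by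
    apply quad_taylor c Jc Γ x u
    · intro t ht; exact hc _ (hmem t ht)
    · intro s hs t ht
      calc ‖Jc (x + t • u) - Jc (x + s • u)‖
          ≤ Γ * ‖(x + t • u) - (x + s • u)‖ := hcL _ (hmem t ht) _ (hmem s hs)
        _ = Γ * (|t - s| * ‖u‖) := by rw [hsub s hs t ht]
  -- bound for f
  have hfb : ‖f (x + u) - f x - ⟪gf x, u⟫‖ ≤ L / 2 * ‖u‖ ^ 2 := by
    have := quad_taylor f (fun y => InnerProductSpace.toDual ℝ (EuclideanSpace ℝ (Fin n)) (gf y)) L x u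
      (fun t ht => (hasGradientAt_iff_hasFDerivAt.mp (hf _ (hmem t ht))))
      (fun s hs t ht => by
        calc ‖(InnerProductSpace.toDual ℝ (EuclideanSpace ℝ (Fin n)) (gf (x + t • u)) : EuclideanSpace ℝ (Fin n) →L[ℝ] ℝ)
              - InnerProductSpace.toDual ℝ (EuclideanSpace ℝ (Fin n)) (gf (x + s • u))‖
            = ‖gf (x + t • u) - gf (x + s • u)‖ := by
              rw [← map_sub]
              exact (InnerProductSpace.toDual ℝ (EuclideanSpace ℝ (Fin n))).norm_map _
          _ ≤ L * ‖(x + t • u) - (x + s • u)‖ := hfL _ (hmem t ht) _ (hmem s hs)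
          _ = L * (|t - s| * ‖u‖) := by rw [hsub s hs t ht])
    simpa [InnerProductSpace.toDual_apply_apply] using this
  -- rewrite quantities
  have hnu : ‖u‖ ^ 2 = α ^ 2 * ‖d‖ ^ 2 := by
    rw [hu, norm_smul, Real.norm_eq_abs, abs_of_pos hα, mul_pow]
  have hJu : Jc x u = α • Jc x d := by rw [hu, map_smul]
  have hiu : ⟪gf x, u⟫ = α * ⟪gf x, d⟫ := real_inner_smul_right _ _ _
  -- bound on f part
  have hf1 : f (x + u) - f x ≤ α * ⟪gf x, d⟫ + L / 2 * (α ^ 2 * ‖d‖ ^ 2) := by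
    have h := (abs_le.mp (by rwa [Real.norm_eq_abs] at hfb)).2
    rw [hnu, hiu] at h
    linarith
  have hf2 : τ * f (x + u) - τ * f x ≤ τ * (α * ⟪gf x, d⟫ + L / 2 * (α ^ 2 * ‖d‖ ^ 2)) := by
    rw [← mul_sub]
    exact mul_le_mul_of_nonneg_left hf1 hτ.le
  -- bound on c part
  have hc1 : ‖c (x + u)‖ ≤ ‖c x + α • Jc x d‖ + Γ / 2 * (α ^ 2 * ‖d‖ ^ 2) := by
    have h1 : c (x + u) = (c x + α • Jc x d) + (c (x + u) - c x - Jc x u) := by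
      rw [hJu]; abel
    calc ‖c (x + u)‖ ≤ ‖c x + α • Jc x d‖ + ‖c (x + u) - c x - Jc x u‖ := by
          calc ‖c (x + u)‖ = ‖(c x + α • Jc x d) + (c (x + u) - c x - Jc x u)‖ :=
                congrArg norm h1
            _ ≤ _ := norm_add_le _ _
      _ ≤ ‖c x + α • Jc x d‖ + Γ / 2 * (α ^ 2 * ‖d‖ ^ 2) := by
          rw [← hnu]; linarith
  -- finish
  rw [← hsame, inner_sub_right]
  nlinarith [hf2, hc1, hφ]
end

section
/- Let (u,w) be the unique optimal solution of subproblem (V). Then ‖b‖² − ‖b + GᵀG w‖² ≥ ‖GᵀG w‖² + 2μ‖u‖². -/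
open Matrix

/-- For the optimal solution `(u,w)` of subproblem (V):
`‖b‖² − ‖b + GᵀGw‖² ≥ ‖GᵀGw‖² + 2μ‖u‖²`. -/
theorem normal_subproblem_squared_decrease_bound
    {n m : ℕ} (G : Matrix (Fin n) (Fin m) ℝ) (b : Fin m → ℝ)
    (x : Fin n → ℝ) (μ : ℝ) (hx : 0 ≤ x) (hμ : 0 < μ)
    (hrank : Function.Injective G.mulVec)
    (u : Fin n → ℝ) (w : Fin m → ℝ)
    (hfeas : feasV G x (u, w))
    (hopt : ∀ q, feasV G x q → objV G b μ (u, w) ≤ objV G b μ q) :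
    nrm2 b ^ 2 - nrm2 (b + Gᵀ *ᵥ (G *ᵥ w)) ^ 2 ≥
      nrm2 (Gᵀ *ᵥ (G *ᵥ w)) ^ 2 + 2 * μ * nrm2 u ^ 2 := by
  classical
  have sqn : ∀ {k : ℕ} (a : Fin k → ℝ), nrm2 a ^ 2 = ∑ i, (a i)^2 := fun a =>
    Real.sq_sqrt (Finset.sum_nonneg fun i _ => sq_nonneg _)
  set A : Fin m → ℝ := Gᵀ *ᵥ (G *ᵥ w) with hA
  set D : ℝ := ∑ i, b i * A i with hD
  set Sb : ℝ := ∑ i, (b i)^2 with hSb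
  set SA : ℝ := ∑ i, (A i)^2 with hSA
  set Su : ℝ := ∑ i, (u i)^2 with hSu
  have hSA0 : 0 ≤ SA := Finset.sum_nonneg fun i _ => sq_nonneg _
  have hSu0 : 0 ≤ Su := Finset.sum_nonneg fun i _ => sq_nonneg _
  have expand : ∀ s : ℝ, ∑ i, (b i + s * A i)^2 = Sb + 2*s*D + s^2*SA := by
    intro s
    rw [hSb, hD, hSA, Finset.mul_sum, Finset.mul_sum, ← Finset.sum_add_distrib,
      ← Finset.sum_add_distrib]
    exact Finset.sum_congr rfl fun i _ => by ring
  have key : ∀ t : ℝ, 0 < t → t ≤ 1 →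
      2*D + 2*(SA + μ*Su) ≤ t*(SA + μ*Su) := by
    intro t ht ht1
    have hfeas' : feasV G x ((1-t) • u, (1-t) • w) := by
      constructor
      · show Gᵀ *ᵥ ((1-t) • u) = 0
        rw [Matrix.mulVec_smul, hfeas.1, smul_zero]
      · intro i
        have h1 := hfeas.2 i
        have h2 := hx i
        simp only [Matrix.mulVec_smul, Pi.add_apply, Pi.smul_apply, smul_eq_mul,
          Pi.zero_apply] at h1 h2 ⊢
        nlinarith
    have hle := hopt _ hfeas'
    have e1 : nrm2 (b + A) ^ 2 = Sb + 2*D + SA := by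
      rw [sqn]
      have : ∀ i, (b + A) i = b i + 1 * A i := fun i => by simp
      rw [Finset.sum_congr rfl fun i _ => by rw [this i]]
      simpa using expand 1
    have e2 : nrm2 (b + Gᵀ *ᵥ (G *ᵥ ((1-t) • w))) ^ 2 = Sb + 2*(1-t)*D + (1-t)^2*SA := by
      rw [sqn]
      have hv : Gᵀ *ᵥ (G *ᵥ ((1-t) • w)) = (1-t) • A := by
        rw [Matrix.mulVec_smul, Matrix.mulVec_smul]
      rw [hv]
      rw [Finset.sum_congr rfl fun i _ => by
        show ((b + (1-t) • A) i)^2 = (b i + (1-t) * A i)^2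
        rw [Pi.add_apply, Pi.smul_apply, smul_eq_mul]]
      exact expand (1-t)
    have e3 : nrm2 ((1-t) • u) ^ 2 = (1-t)^2 * Su := by
      rw [sqn, hSu, Finset.mul_sum]
      exact Finset.sum_congr rfl fun i _ => by
        rw [Pi.smul_apply, smul_eq_mul]; ring
    have e4 : nrm2 u ^ 2 = Su := sqn u
    simp only [objV] at hle
    rw [e2, e3] at hle
    have e1' : nrm2 (b + Gᵀ *ᵥ (G *ᵥ w)) ^ 2 = Sb + 2*D + SA := e1
    rw [e1', e4] at hle
    nlinarith [hle, mul_pos ht ht]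
  have hE0 : 0 ≤ SA + μ*Su := by nlinarith
  have hc : 2*D + 2*(SA + μ*Su) ≤ 0 := by
    rcases eq_or_lt_of_le hE0 with hE | hE
    · have := key 1 one_pos le_rfl
      linarith [this, hE.symm ▸ this]
    · by_contra hcon
      push_neg at hcon
      set c := 2*D + 2*(SA + μ*Su) with hcdef
      have ht0 : 0 < min 1 (c/(2*(SA + μ*Su))) :=
        lt_min one_pos (by positivity)
      have hk := key _ ht0 (min_le_left _ _)
      have h2 : min 1 (c/(2*(SA + μ*Su))) * (SA + μ*Su)
          ≤ (c/(2*(SA + μ*Su))) * (SA + μ*Su) :=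
        mul_le_mul_of_nonneg_right (min_le_right _ _) hE.le
      have h3 : (c/(2*(SA + μ*Su))) * (SA + μ*Su) = c/2 := by
        field_simp
      linarith
  have e1 : nrm2 (b + Gᵀ *ᵥ (G *ᵥ w)) ^ 2 = Sb + 2*D + SA := by
    rw [sqn]
    rw [Finset.sum_congr rfl fun i _ => by
      show ((b + A) i)^2 = (b i + 1 * A i)^2; simp]
    simpa using expand 1
  have eA : nrm2 (Gᵀ *ᵥ (G *ᵥ w)) ^ 2 = SA := sqn A
  have eb : nrm2 b ^ 2 = Sb := sqn b
  have eu : nrm2 u ^ 2 = Su := sqn u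
  rw [e1, eA, eb, eu]
  linarith
end
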